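/- Let A = (a_{ij}) be a 2×2 diagonal traceless symmetric real matrix and B = (b_{ij}) a 2×2 symmetric real matrix. Then (tr(AB))² + Σ_{i,j}(Σ_k(a_{ik}b_{jk} - a_{jk}b_{ik}))² ≤ 2|A|²|B|², where |A|² = Σ a_{ij}², |B|² = Σ b_{ij}². -/

import Mathlib

/-!
Write `A = diag(a, -a)` and `B = [[p, q], [q, r]]`. For symmetric matrices the inner sum over `k`
is the `(i, j)` entry of the commutator `AB - BA`, whose only nonzero entries here are `±2aq`, while
`tr(AB) = a(p - r)`. The claim becomes `a²(p - r)² + 8a²q² ≤ 4a²(p² + 2q² + r²)`, which holds since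
`(p - r)² ≤ 2(p² + r²)`.
-/

open Matrix

theorem Matrix.sum_mul_sub_mul_eq_commutator_apply {n R : Type*} [Fintype n] [CommRing R]
    {A B : Matrix n n R} (hA : A.IsSymm) (hB : B.IsSymm) (i j : n) :
    ∑ k, (A i k * B j k - A j k * B i k) = (A * B - B * A) i j := by
  simp only [Matrix.sub_apply, mul_apply, Finset.sum_sub_distrib, hA.apply, hB.apply, mul_comm]

section FinTwo

variable {R : Type*} [CommRing R] (a p q r : R)

theorem Matrix.trace_diag_neg_mul_fin_two :
    trace (!![a, 0; 0, -a] * !![p, q; q, r]) = a * (p - r) := by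
  rw [mul_fin_two, trace_fin_two_of]
  ring

theorem Matrix.commutator_diag_neg_fin_two :
    !![a, 0; 0, -a] * !![p, q; q, r] - !![p, q; q, r] * !![a, 0; 0, -a]
      = !![0, 2 * a * q; -(2 * a * q), 0] := by
  rw [mul_fin_two, mul_fin_two]
  ext i j
  fin_cases i <;> fin_cases j <;>
    simp only [Matrix.sub_apply, of_apply, cons_val', cons_val_zero, cons_val_one,
      cons_val_fin_one, Fin.zero_eta, Fin.mk_one] <;> ring

end FinTwo

theorem stmt5_general (A B : Matrix (Fin 2) (Fin 2) ℝ)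
    (hAd : A 0 1 = 0 ∧ A 1 0 = 0) (hAtr : A 0 0 + A 1 1 = 0)
    (hB : B.IsSymm) :
    (Matrix.trace (A * B))^2
      + ∑ i : Fin 2, ∑ j : Fin 2, (∑ k : Fin 2, (A i k * B j k - A j k * B i k))^2
    ≤ 2 * (∑ i : Fin 2, ∑ j : Fin 2, (A i j)^2) * (∑ i : Fin 2, ∑ j : Fin 2, (B i j)^2) := by
  obtain ⟨a, rfl⟩ : ∃ a, A = !![a, 0; 0, -a] :=
    ⟨A 0 0, (eta_fin_two A).trans (by rw [hAd.1, hAd.2, eq_neg_of_add_eq_zero_right hAtr])⟩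
  obtain ⟨p, q, r, rfl⟩ : ∃ p q r, B = !![p, q; q, r] :=
    ⟨B 0 0, B 0 1, B 1 1, (eta_fin_two B).trans (by rw [hB.apply 0 1])⟩
  have hA : (!![a, 0; 0, -a]).IsSymm := diagonal_vec2 a (-a) ▸ isSymm_diagonal ![a, -a]
  simp_rw [sum_mul_sub_mul_eq_commutator_apply hA hB, commutator_diag_neg_fin_two,
    trace_diag_neg_mul_fin_two]
  simp only [Fin.sum_univ_two, of_apply, cons_val', cons_val_zero, cons_val_one, cons_val_fin_one]
  nlinarith [mul_nonneg (sq_nonneg a) (sq_nonneg (p + r))]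

theorem stmt5 (A B : Matrix (Fin 2) (Fin 2) ℝ)
    (hAd : A 0 1 = 0 ∧ A 1 0 = 0) (hAtr : A 0 0 + A 1 1 = 0)
    (hA : A.IsSymm) (hB : B.IsSymm) :
    (Matrix.trace (A * B))^2
      + ∑ i : Fin 2, ∑ j : Fin 2, (∑ k : Fin 2, (A i k * B j k - A j k * B i k))^2
    ≤ 2 * (∑ i : Fin 2, ∑ j : Fin 2, (A i j)^2) * (∑ i : Fin 2, ∑ j : Fin 2, (B i j)^2) :=
  stmt5_general A B hAd hAtr hB
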